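/- Fresh renaming preserves observational equivalence: for a fresh substitution σ = [n⃗:=m⃗] (with the m⃗ fresh and distinct), M ≈_P N if and only if Mσ ≈_{Pσ} Nσ. -/

import Mathlib

/-- Terms of continuation calculus: names (coded as naturals) and dot. -/
inductive Tm where
  | name : ℕ → Tm
  | dot : Tm → Tm → Tm
deriving DecidableEq

/-- Right-hand sides of rules: names, variables (de Bruijn-style indices
into the left-hand side's variable list), and dot. -/
inductive Rhs where
  | name : ℕ → Rhs
  | var : ℕ → Rhs
  | dot : Rhs → Rhs → Rhs
deriving DecidableEq

/-- A rule `n.x₁.⋯.xₖ → r`: head name, arity `k`, and right-hand side. -/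
structure Rule where
  head : ℕ
  arity : ℕ
  rhs : Rhs
deriving DecidableEq

/-- A program is a finite set of rules. -/
abbrev Program := Finset Rule

/-- Variables occurring in a right-hand side. -/
def Rhs.HasVar : Rhs → ℕ → Prop
  | .name _, _ => False
  | .var w, v => w = v
  | .dot a b, v => a.HasVar v ∨ b.HasVar v

/-- Well-formedness: every variable of a right-hand side occurs in the
left-hand side, and there is at most one rule per head name. -/
def Program.Wf (P : Program) : Prop :=
  (∀ r ∈ P, ∀ v, r.rhs.HasVar v → v < r.arity) ∧
  (∀ r₁ ∈ P, ∀ r₂ ∈ P, r₁.head = r₂.head → r₁ = r₂)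

/-- `n.t₁.⋯.tₖ` : left-associated application of a term to a list of terms. -/
def Tm.apps : Tm → List Tm → Tm
  | h, [] => h
  | h, t :: ts => Tm.apps (h.dot t) ts

/-- Instantiation of a right-hand side with the terms matched by the
left-hand side variables; fails if some variable is out of range. -/
def Rhs.inst (ts : List Tm) : Rhs → Option Tm
  | .name n => some (.name n)
  | .var v => ts[v]?
  | .dot a b => do pure (.dot (← a.inst ts) (← b.inst ts))

/-- One-step evaluation `M →_P N`. -/
def Step (P : Program) (M N : Tm) : Prop :=
  ∃ r ∈ P, ∃ ts : List Tm, ts.length = r.arity ∧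
    M = Tm.apps (.name r.head) ts ∧ r.rhs.inst ts = some N

/-- Multi-step evaluation `M →*_P N`. -/
def Steps (P : Program) : Tm → Tm → Prop := Relation.ReflTransGen (Step P)

/-- `M` is final: it has no successor. -/
def Final (P : Program) (M : Tm) : Prop := ¬ ∃ N, Step P M N

/-- `M` terminates: it evaluates to a final term. -/
def Terminates (P : Program) (M : Tm) : Prop := ∃ N, Steps P M N ∧ Final P N

/-- The name `m` occurs in a term. -/
def Tm.HasName (m : ℕ) : Tm → Prop
  | .name n => n = m
  | .dot a b => a.HasName m ∨ b.HasName m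

/-- The name `m` occurs in a right-hand side. -/
def Rhs.HasName (m : ℕ) : Rhs → Prop
  | .name n => n = m
  | .var _ => False
  | .dot a b => a.HasName m ∨ b.HasName m

/-- The name `m` occurs (is mentioned) in a program. -/
def Program.HasName (P : Program) (m : ℕ) : Prop :=
  ∃ r ∈ P, r.head = m ∨ r.rhs.HasName m

/-- The name `m` is defined by the program (is the head of some rule). -/
def Program.Defines (P : Program) (m : ℕ) : Prop :=
  ∃ r ∈ P, r.head = m

/-- Substitution of a term for a name, `M[fr := t]`. -/
def Tm.subName (m : ℕ) (t : Tm) : Tm → Tm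
  | .name n => if n = m then t else .name n
  | .dot a b => .dot (Tm.subName m t a) (Tm.subName m t b)

/-- Common reduct relation `M =_P N`. -/
def CommonRed (P : Program) (M N : Tm) : Prop :=
  ∃ t, Steps P M t ∧ Steps P N t

/-- Observational equivalence `M ≈_P N`. -/
def ObsEq (P : Program) (M N : Tm) : Prop :=
  ∀ P' : Program, P'.Wf → P ⊆ P' →
    ∀ X : Tm, (Terminates P' (X.dot M) ↔ Terminates P' (X.dot N))

/-- Renaming of names in a term. -/
def Tm.rename (f : ℕ → ℕ) : Tm → Tm
  | .name n => .name (f n)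
  | .dot a b => .dot (a.rename f) (b.rename f)

/-- Renaming of names in a right-hand side. -/
def Rhs.rename (f : ℕ → ℕ) : Rhs → Rhs
  | .name n => .name (f n)
  | .var v => .var v
  | .dot a b => .dot (a.rename f) (b.rename f)

/-- Renaming of names in a rule. -/
def Rule.rename (f : ℕ → ℕ) (r : Rule) : Rule :=
  ⟨f r.head, r.arity, r.rhs.rename f⟩

/-- Renaming of names in a program. -/
def Program.rename (f : ℕ → ℕ) (P : Program) : Program :=
  P.image (Rule.rename f)

/-- The fresh substitution `[n⃗ := m⃗]` as a function on names. -/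
def renFun (ns ms : List ℕ) (n : ℕ) : ℕ :=
  ((ns.zip ms).lookup n).getD n

/-- `M` has arity `k` under `P`: `M = n.q₁.⋯.qᵢ` where `n` has a rule of
arity `i + k`. -/
def Tm.ArityIs (P : Program) (M : Tm) (k : ℕ) : Prop :=
  ∃ r ∈ P, ∃ ts : List Tm, M = Tm.apps (.name r.head) ts ∧ ts.length + k = r.arity

/-!
Renaming by a permutation `e` of names is an automorphism of the whole calculus: it commutes
with rule instantiation, so it maps steps to steps, and `e.symm` maps them back. Hence it preserves
and reflects well-formedness, inclusion of programs and termination, and every program extending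
`Pe` is the image of a program extending `P`; so `≈_P` is invariant under permutations. A fresh
substitution `[n⃗ := m⃗]` agrees with the product of the disjoint transpositions `(nᵢ mᵢ)` on every
name other than the `mᵢ`, hence on all names of `P`, `M` and `N`.
-/

open Function

section Rename

variable {f g : ℕ → ℕ}

lemma Tm.rename_rename (M : Tm) : (M.rename f).rename g = M.rename (g ∘ f) := by
  induction M with
  | name n => rfl
  | dot a b iha ihb => simp only [Tm.rename, iha, ihb]

lemma Tm.rename_id (M : Tm) : M.rename id = M := by
  induction M with
  | name n => rfl
  | dot a b iha ihb => simp only [Tm.rename, iha, ihb]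

lemma Tm.rename_congr {M : Tm} (h : ∀ x, M.HasName x → f x = g x) : M.rename f = M.rename g := by
  induction M with
  | name n => simp only [Tm.rename, h n rfl]
  | dot a b iha ihb =>
    simp only [Tm.rename, iha fun x hx => h x (Or.inl hx), ihb fun x hx => h x (Or.inr hx)]

lemma Tm.apps_rename (h : Tm) (ts : List Tm) :
    (Tm.apps h ts).rename f = Tm.apps (h.rename f) (ts.map (Tm.rename f)) := by
  induction ts generalizing h with
  | nil => rfl
  | cons t ts ih => exact ih (h.dot t)

lemma Rhs.rename_rename (r : Rhs) : (r.rename f).rename g = r.rename (g ∘ f) := by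
  induction r with
  | name n => rfl
  | var v => rfl
  | dot a b iha ihb => simp only [Rhs.rename, iha, ihb]

lemma Rhs.rename_id (r : Rhs) : r.rename id = r := by
  induction r with
  | name n => rfl
  | var v => rfl
  | dot a b iha ihb => simp only [Rhs.rename, iha, ihb]

lemma Rhs.rename_congr {r : Rhs} (h : ∀ x, r.HasName x → f x = g x) :
    r.rename f = r.rename g := by
  induction r with
  | name n => simp only [Rhs.rename, h n rfl]
  | var v => rfl
  | dot a b iha ihb =>
    simp only [Rhs.rename, iha fun x hx => h x (Or.inl hx), ihb fun x hx => h x (Or.inr hx)]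

lemma Rhs.hasVar_rename {r : Rhs} {v : ℕ} : (r.rename f).HasVar v ↔ r.HasVar v := by
  induction r with
  | name n => rfl
  | var w => rfl
  | dot a b iha ihb => simp only [Rhs.rename, Rhs.HasVar, iha, ihb]

lemma Rhs.inst_rename (ts : List Tm) (r : Rhs) :
    (r.rename f).inst (ts.map (Tm.rename f)) = (r.inst ts).map (Tm.rename f) := by
  induction r with
  | name n => rfl
  | var v => simp [Rhs.rename, Rhs.inst, List.getElem?_map]
  | dot a b iha ihb =>
    simp only [Rhs.rename, Rhs.inst, iha, ihb]
    cases a.inst ts <;> cases b.inst ts <;> rfl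

lemma Rule.rename_rename (r : Rule) : (r.rename f).rename g = r.rename (g ∘ f) := by
  simp only [Rule.rename, Rhs.rename_rename, comp_apply]

lemma Rule.rename_id (r : Rule) : r.rename id = r := by
  simp only [Rule.rename, Rhs.rename_id, id_eq]

lemma Program.rename_rename (P : Program) : (P.rename f).rename g = P.rename (g ∘ f) := by
  simp only [Program.rename, Finset.image_image, comp_def, Rule.rename_rename]

lemma Program.rename_id (P : Program) : P.rename id = P := by
  rw [Program.rename, funext Rule.rename_id, Finset.image_id']

lemma Program.rename_congr {P : Program} (h : ∀ x, P.HasName x → f x = g x) :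
    P.rename f = P.rename g := by
  refine Finset.image_congr fun r hr => ?_
  simp only [Rule.rename, h r.head ⟨r, hr, Or.inl rfl⟩,
    Rhs.rename_congr fun x hx => h x ⟨r, hr, Or.inr hx⟩]

lemma Program.rename_mono {P Q : Program} (h : P ⊆ Q) : P.rename f ⊆ Q.rename f :=
  Finset.image_subset_image h

lemma Program.Wf.rename {P : Program} (hf : Injective f) (hP : P.Wf) : (P.rename f).Wf := by
  refine ⟨?_, ?_⟩
  · intro _ hr' v hv
    obtain ⟨r, hr, rfl⟩ := Finset.mem_image.1 hr'
    exact hP.1 r hr v (Rhs.hasVar_rename.1 hv)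
  · intro _ hr₁' _ hr₂' hh
    obtain ⟨r₁, hr₁, rfl⟩ := Finset.mem_image.1 hr₁'
    obtain ⟨r₂, hr₂, rfl⟩ := Finset.mem_image.1 hr₂'
    rw [hP.2 r₁ hr₁ r₂ hr₂ (hf hh)]

lemma Step.rename {P : Program} {M N : Tm} (f : ℕ → ℕ) (h : Step P M N) :
    Step (P.rename f) (M.rename f) (N.rename f) := by
  obtain ⟨r, hr, ts, hlen, rfl, hinst⟩ := h
  refine ⟨r.rename f, Finset.mem_image_of_mem _ hr, ts.map (Tm.rename f), ?_, ?_, ?_⟩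
  · exact (List.length_map _).trans hlen
  · exact Tm.apps_rename _ _
  · exact (Rhs.inst_rename ts r.rhs).trans (by rw [hinst]; rfl)

lemma Steps.rename {P : Program} {M N : Tm} (f : ℕ → ℕ) (h : Steps P M N) :
    Steps (P.rename f) (M.rename f) (N.rename f) :=
  Relation.ReflTransGen.lift (Tm.rename f) (fun _ _ => Step.rename f) _ _ h

end Rename

section Perm

variable (e : Equiv.Perm ℕ) {P : Program} {M N : Tm}

lemma Tm.rename_symm_rename (M : Tm) : (M.rename e).rename e.symm = M := by
  rw [Tm.rename_rename, Equiv.symm_comp_self, Tm.rename_id]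

lemma Program.rename_symm_rename (P : Program) : (P.rename e).rename e.symm = P := by
  rw [Program.rename_rename, Equiv.symm_comp_self, Program.rename_id]

lemma Final.rename (h : Final P M) : Final (P.rename e) (M.rename e) := by
  rintro ⟨T, hT⟩
  have := hT.rename e.symm
  rw [Program.rename_symm_rename, Tm.rename_symm_rename] at this
  exact h ⟨_, this⟩

lemma Terminates.rename (h : Terminates P M) : Terminates (P.rename e) (M.rename e) :=
  let ⟨T, hsteps, hfinal⟩ := h
  ⟨T.rename e, hsteps.rename e, hfinal.rename e⟩

lemma terminates_rename_iff : Terminates (P.rename e) (M.rename e) ↔ Terminates P M := by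
  refine ⟨fun h => ?_, Terminates.rename e⟩
  simpa only [Program.rename_symm_rename, Tm.rename_symm_rename] using h.rename e.symm

lemma ObsEq.rename (h : ObsEq P M N) : ObsEq (P.rename e) (M.rename e) (N.rename e) := by
  intro P' hP' hPP' X
  have hP'' : (P'.rename e.symm).Wf := hP'.rename e.symm.injective
  have hPP'' : P ⊆ P'.rename e.symm := by
    simpa only [Program.rename_symm_rename] using Program.rename_mono (f := e.symm) hPP'
  have transport (W : Tm) : Terminates P' (X.dot (W.rename e)) ↔
      Terminates (P'.rename e.symm) ((X.rename e.symm).dot W) := by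
    rw [← terminates_rename_iff e.symm, Tm.rename, Tm.rename_symm_rename]
  exact (transport M).trans ((h _ hP'' hPP'' _).trans (transport N).symm)

lemma obsEq_rename_iff : ObsEq (P.rename e) (M.rename e) (N.rename e) ↔ ObsEq P M N := by
  refine ⟨fun h => ?_, ObsEq.rename e⟩
  simpa only [Program.rename_symm_rename, Tm.rename_symm_rename] using h.rename e.symm

end Perm

section FreshSubstitution

variable {ns ms : List ℕ}

def zipSwaps (ns ms : List ℕ) : Equiv.Perm ℕ :=
  ((ns.zip ms).map fun p => Equiv.swap p.1 p.2).prod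

lemma zipSwaps_cons_cons (a b : ℕ) (ns ms : List ℕ) :
    zipSwaps (a :: ns) (b :: ms) = Equiv.swap a b * zipSwaps ns ms := by
  simp only [zipSwaps, List.zip_cons_cons, List.map_cons, List.prod_cons]

lemma renFun_cons_cons (a b x : ℕ) (ns ms : List ℕ) :
    renFun (a :: ns) (b :: ms) x = if x = a then b else renFun ns ms x := by
  by_cases h : x = a
  · simp [renFun, h]
  · simp [renFun, List.lookup_cons, h, beq_eq_false_iff_ne.2 h]

lemma renFun_of_notMem {x : ℕ} (hx : x ∉ ns) : renFun ns ms x = x := by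
  induction ns generalizing ms with
  | nil => rfl
  | cons a ns ih =>
    cases ms with
    | nil => rfl
    | cons b ms =>
      rw [List.mem_cons, not_or] at hx
      rw [renFun_cons_cons, if_neg hx.1, ih hx.2]

lemma renFun_eq_or_mem (x : ℕ) : renFun ns ms x = x ∨ renFun ns ms x ∈ ms := by
  induction ns generalizing ms with
  | nil => exact Or.inl rfl
  | cons a ns ih =>
    cases ms with
    | nil => exact Or.inl rfl
    | cons b ms =>
      rw [renFun_cons_cons]
      split_ifs
      · exact Or.inr List.mem_cons_self
      · exact ih.imp_right (List.mem_cons_of_mem b)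

lemma renFun_eq_zipSwaps (hns : ns.Nodup) (hms : ms.Nodup) (hdisj : ∀ m ∈ ms, m ∉ ns)
    {x : ℕ} (hx : x ∉ ms) : renFun ns ms x = zipSwaps ns ms x := by
  induction ns generalizing ms x with
  | nil => rfl
  | cons a ns ih =>
    cases ms with
    | nil => rfl
    | cons b ms =>
      obtain ⟨ha, hns⟩ := List.nodup_cons.1 hns
      obtain ⟨hb, hms⟩ := List.nodup_cons.1 hms
      obtain ⟨hxb, hx⟩ := not_or.1 (List.mem_cons.not.1 hx)
      have hdisj' : ∀ m ∈ ms, m ∉ ns := fun m hm hmn =>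
        hdisj m (List.mem_cons_of_mem _ hm) (List.mem_cons_of_mem _ hmn)
      rw [renFun_cons_cons, zipSwaps_cons_cons, Equiv.Perm.mul_apply, ← ih hns hms hdisj' hx]
      split_ifs with hxa
      · rw [hxa, renFun_of_notMem ha, Equiv.swap_apply_left]
      · rcases renFun_eq_or_mem (ns := ns) (ms := ms) x with hy | hy
        · rw [hy, Equiv.swap_apply_of_ne_of_ne hxa hxb]
        · refine (Equiv.swap_apply_of_ne_of_ne ?_ ?_).symm
          · intro hya
            exact hdisj _ (List.mem_cons_of_mem b hy) (hya ▸ List.mem_cons_self)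
          · rintro hyb
            exact hb (hyb ▸ hy)

end FreshSubstitution

theorem fresh_renaming_preserves_obsEq_general (P : Program) (M N : Tm)
    (ns ms : List ℕ)
    (hns : ns.Nodup) (hms : ms.Nodup)
    (hfresh : ∀ m ∈ ms,
      ¬ Tm.HasName m M ∧ ¬ Tm.HasName m N ∧ ¬ P.HasName m ∧ m ∉ ns) :
    ObsEq P M N ↔
      ObsEq (P.rename (renFun ns ms)) (M.rename (renFun ns ms)) (N.rename (renFun ns ms)) := by
  have agree {x : ℕ} (hx : x ∉ ms) : renFun ns ms x = zipSwaps ns ms x :=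
    renFun_eq_zipSwaps hns hms (fun m hm => (hfresh m hm).2.2.2) hx
  rw [Program.rename_congr fun x hx => agree fun hm => (hfresh x hm).2.2.1 hx,
    Tm.rename_congr fun x hx => agree fun hm => (hfresh x hm).1 hx,
    Tm.rename_congr fun x hx => agree fun hm => (hfresh x hm).2.1 hx, obsEq_rename_iff]

theorem fresh_renaming_preserves_obsEq (P : Program) (hP : P.Wf) (M N : Tm)
    (ns ms : List ℕ) (hlen : ns.length = ms.length)
    (hns : ns.Nodup) (hms : ms.Nodup)
    (hfresh : ∀ m ∈ ms,
      ¬ Tm.HasName m M ∧ ¬ Tm.HasName m N ∧ ¬ P.HasName m ∧ m ∉ ns) :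
    ObsEq P M N ↔
      ObsEq (P.rename (renFun ns ms)) (M.rename (renFun ns ms)) (N.rename (renFun ns ms)) :=
  fresh_renaming_preserves_obsEq_general P M N ns ms hns hms hfresh
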